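/- arXiv:1204.0277 — 2 statements merged into one kernel-verified Lean document; each statement's English description precedes it below -/
import Mathlib

section
/- Let A be an m × n real matrix (m > n) with full column rank and unit-norm rows a_1, …, a_m, and suppose Ax = b. Let x_{k-1} be any vector, select an ordered pair (r, s) of distinct indices uniformly at random from the m² − m such pairs, and let x_k be the two-subspace Kaczmarz update: with μ = ⟨a_r, a_s⟩, v = (a_r − μ a_s)/√(1−μ²), y = x_{k-1} + (b_s − ⟨x_{k-1}, a_s⟩)a_s, β = (b_r − b_s μ)/√(1−μ²), x_k = y + (β − ⟨y, v⟩)v. Assume |⟨a_r, a_s⟩| < 1 for all r ≠ s. Then E‖x − x_k‖₂² ≤ (1 − 1/R)²‖x − x_{k-1}‖₂² − (1/(m²−m)) ∑_{r<s} C_{r,s}² (⟨x − x_{k-1}, a_r⟩² + ⟨x − x_{k-1}, a_s⟩²), where C_{r,s} = (|μ_{r,s}| − μ_{r,s}²)/√(1 − μ_{r,s}²), μ_{r,s} = ⟨a_r, a_s⟩, and R = ‖A⁻¹‖²‖A‖_F². -/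
open scoped RealInnerProductSpace

theorem aux_proj {E : Type*} [NormedAddCommGroup E] [InnerProductSpace ℝ E]
    (w u : E) (hu : ‖u‖ = 1) :
    ‖w - ⟪w, u⟫ • u‖ ^ 2 = ‖w‖ ^ 2 - ⟪w, u⟫ ^ 2 := by
  rw [norm_sub_sq_real, real_inner_smul_right, norm_smul, hu, mul_one, Real.norm_eq_abs, sq_abs]
  ring

theorem scalar_ineq (μ α γ E c : ℝ) (hd : 0 < 1 - μ^2)
    (hc : c = (|μ| - μ^2) / Real.sqrt (1 - μ^2)) :
    (E - γ^2 - (α - μ*γ)^2/(1-μ^2)) + (E - α^2 - (γ - μ*α)^2/(1-μ^2)) + c^2*(α^2+γ^2)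
      ≤ (E - α^2 - (γ - μ*α)^2) + (E - γ^2 - (α - μ*γ)^2) := by
  have hd0 : (1-μ^2) ≠ 0 := ne_of_gt hd
  have hcsq : c^2 = (|μ| - μ^2)^2/(1-μ^2) := by rw [hc, div_pow, Real.sq_sqrt hd.le]
  have key : (|μ| - μ^2)^2 * (α^2+γ^2) ≤ μ^2 * ((α-μ*γ)^2 + (γ-μ*α)^2) := by
    rcases abs_cases μ with ⟨h1, h2⟩ | ⟨h1, h2⟩ <;> rw [h1]
    · nlinarith [mul_nonneg (mul_nonneg h2 h2) (mul_nonneg h2 (sq_nonneg (α - γ)))]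
    · have h2' : 0 ≤ -μ := by linarith
      nlinarith [mul_nonneg (mul_nonneg h2' h2') (mul_nonneg h2' (sq_nonneg (α + γ)))]
  have hL : (E - γ^2 - (α - μ*γ)^2/(1-μ^2)) + (E - α^2 - (γ - μ*α)^2/(1-μ^2)) +
      ((|μ| - μ^2)^2/(1-μ^2))*(α^2+γ^2) =
      ((E - γ^2)*(1-μ^2) - (α-μ*γ)^2 + (E - α^2)*(1-μ^2) - (γ-μ*α)^2
        + (|μ|-μ^2)^2*(α^2+γ^2)) / (1-μ^2) := by
    field_simp
    ring
  have hR : (E - α^2 - (γ - μ*α)^2) + (E - γ^2 - (α - μ*γ)^2) =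
      (((E - α^2 - (γ - μ*α)^2) + (E - γ^2 - (α - μ*γ)^2)) * (1-μ^2)) / (1-μ^2) := by
    field_simp
  rw [hcsq, hL, hR]
  apply (div_le_div_iff_of_pos_right hd).mpr
  nlinarith [key]

theorem sum_pair_le {m : ℕ} (F Z : Fin m → Fin m → ℝ)
    (h : ∀ r s : Fin m, s ≠ r → F r s + F s r ≤ Z r s + Z s r) :
    (∑ r : Fin m, ∑ s ∈ Finset.univ.erase r, F r s) ≤
      ∑ r : Fin m, ∑ s ∈ Finset.univ.erase r, Z r s := by
  have hswap : ∀ f : Fin m → Fin m → ℝ,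
      (∑ r : Fin m, ∑ s ∈ Finset.univ.erase r, f r s) =
        ∑ r : Fin m, ∑ s ∈ Finset.univ.erase r, f s r := fun f =>
    Finset.sum_comm' (fun x y => by simp [Finset.mem_erase, ne_comm])
  have h1 : (∑ r : Fin m, ∑ s ∈ Finset.univ.erase r, (F r s + F s r)) ≤
      ∑ r : Fin m, ∑ s ∈ Finset.univ.erase r, (Z r s + Z s r) :=
    Finset.sum_le_sum fun r _ => Finset.sum_le_sum fun s hs =>
      h r s (Finset.mem_erase.mp hs).1
  have h2 : (∑ r : Fin m, ∑ s ∈ Finset.univ.erase r, (F r s + F s r)) =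
      (∑ r : Fin m, ∑ s ∈ Finset.univ.erase r, F r s) +
        (∑ r : Fin m, ∑ s ∈ Finset.univ.erase r, F s r) := by
    simp [Finset.sum_add_distrib]
  have h3 : (∑ r : Fin m, ∑ s ∈ Finset.univ.erase r, (Z r s + Z s r)) =
      (∑ r : Fin m, ∑ s ∈ Finset.univ.erase r, Z r s) +
        (∑ r : Fin m, ∑ s ∈ Finset.univ.erase r, Z s r) := by
    simp [Finset.sum_add_distrib]
  rw [h2, h3, ← hswap F, ← hswap Z] at h1
  linarith

theorem stmt11 {m n : ℕ} (hmn : n < m)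
    (a : Fin m → EuclideanSpace ℝ (Fin n)) (ha : ∀ r, ‖a r‖ = 1)
    (hrank : ∀ z : EuclideanSpace ℝ (Fin n), (∀ r, ⟪a r, z⟫ = 0) → z = 0)
    (x : EuclideanSpace ℝ (Fin n)) (b : Fin m → ℝ) (hb : ∀ r, ⟪a r, x⟫ = b r)
    (hcoh : ∀ r s, r ≠ s → |⟪a r, a s⟫| < 1)
    (xprev : EuclideanSpace ℝ (Fin n))
    (μ : Fin m → Fin m → ℝ) (hμ : ∀ r s, μ r s = ⟪a r, a s⟫)
    (v : Fin m → Fin m → EuclideanSpace ℝ (Fin n))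
    (hv : ∀ r s, v r s = (Real.sqrt (1 - μ r s ^ 2))⁻¹ • (a r - μ r s • a s))
    (y : Fin m → EuclideanSpace ℝ (Fin n))
    (hy : ∀ s, y s = xprev + (b s - ⟪xprev, a s⟫) • a s)
    (β : Fin m → Fin m → ℝ)
    (hβ : ∀ r s, β r s = (b r - b s * μ r s) / Real.sqrt (1 - μ r s ^ 2))
    (xk : Fin m → Fin m → EuclideanSpace ℝ (Fin n))
    (hxk : ∀ r s, xk r s = y s + (β r s - ⟪y s, v r s⟫) • v r s)
    (C : Fin m → Fin m → ℝ)
    (hC : ∀ r s, C r s = (|μ r s| - μ r s ^ 2) / Real.sqrt (1 - μ r s ^ 2))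
    (Minv : ℝ)
    (hMinv : IsLeast {c : ℝ | 0 ≤ c ∧ ∀ u : EuclideanSpace ℝ (Fin n),
        c * Real.sqrt (∑ r, ⟪a r, u⟫ ^ 2) ≥ ‖u‖} Minv)
    (R : ℝ) (hR : R = Minv ^ 2 * ∑ r, ‖a r‖ ^ 2)
    -- assumed bound on two steps of standard randomized Kaczmarz without replacement
    (hRK : (1 / ((m : ℝ) ^ 2 - m)) *
        ∑ r : Fin m, ∑ s ∈ Finset.univ.erase r,
          ‖x - ((xprev + (b r - ⟪xprev, a r⟫) • a r) +
            (b s - ⟪xprev + (b r - ⟪xprev, a r⟫) • a r, a s⟫) • a s)‖ ^ 2 ≤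
        (1 - 1 / R) ^ 2 * ‖x - xprev‖ ^ 2) :
    (1 / ((m : ℝ) ^ 2 - m)) *
        ∑ r : Fin m, ∑ s ∈ Finset.univ.erase r, ‖x - xk r s‖ ^ 2 ≤
      (1 - 1 / R) ^ 2 * ‖x - xprev‖ ^ 2 -
        (1 / ((m : ℝ) ^ 2 - m)) *
          ∑ r : Fin m, ∑ s : Fin m,
            (if r < s then
              C r s ^ 2 * (⟪x - xprev, a r⟫ ^ 2 + ⟪x - xprev, a s⟫ ^ 2) else 0) := by
  have haa : ∀ r, ⟪a r, a r⟫ = (1:ℝ) := fun r => by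
    rw [real_inner_self_eq_norm_sq, ha r]; norm_num
  have hμs : ∀ r s, μ s r = μ r s := fun r s => by
    rw [hμ, hμ, real_inner_comm]
  have hcoef : ∀ r, b r - ⟪xprev, a r⟫ = ⟪x - xprev, a r⟫ := fun r => by
    rw [inner_sub_left, ← hb r, real_inner_comm]
  have hdpos : ∀ r s, r ≠ s → 0 < 1 - μ r s ^ 2 := fun r s hrs => by
    have h := hcoh r s hrs
    rw [hμ]
    nlinarith [abs_nonneg (⟪a r, a s⟫ : ℝ), sq_abs (⟪a r, a s⟫ : ℝ)]
  -- closed form for the two-step RK iterate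
  have key2 : ∀ r s : Fin m,
      ‖x - ((xprev + (b r - ⟪xprev, a r⟫) • a r) +
        (b s - ⟪xprev + (b r - ⟪xprev, a r⟫) • a r, a s⟫) • a s)‖ ^ 2 =
      ‖x - xprev‖ ^ 2 - ⟪x - xprev, a r⟫ ^ 2 -
        (⟪x - xprev, a s⟫ - μ r s * ⟪x - xprev, a r⟫) ^ 2 := by
    intro r s
    have hc2 : b s - ⟪xprev + (b r - ⟪xprev, a r⟫) • a r, a s⟫ =
        ⟪(x - xprev) - ⟪x - xprev, a r⟫ • a r, a s⟫ := by
      have h1 := hcoef s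
      rw [hcoef r]
      simp only [inner_sub_left, inner_add_left, real_inner_smul_left] at h1 ⊢
      linarith
    have hform : x - ((xprev + (b r - ⟪xprev, a r⟫) • a r) +
        (b s - ⟪xprev + (b r - ⟪xprev, a r⟫) • a r, a s⟫) • a s) =
        ((x - xprev) - ⟪x - xprev, a r⟫ • a r) -
          ⟪(x - xprev) - ⟪x - xprev, a r⟫ • a r, a s⟫ • a s := by
      rw [hc2, hcoef r]
      abel
    rw [hform, aux_proj _ _ (ha s), aux_proj _ _ (ha r)]
    simp only [inner_sub_left, real_inner_smul_left, ← hμ]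
    ring
  have hvn : ∀ r s : Fin m, r ≠ s → ‖v r s‖ = 1 := by
    intro r s hrs
    have hd := hdpos r s hrs
    rw [hv, norm_smul]
    have h1 : ‖a r - μ r s • a s‖ ^ 2 = 1 - μ r s ^ 2 := by
      rw [norm_sub_sq_real, real_inner_smul_right, norm_smul, ha r, ha s, ← hμ,
        Real.norm_eq_abs, mul_one, sq_abs]
      ring
    have h2 : ‖a r - μ r s • a s‖ = Real.sqrt (1 - μ r s ^ 2) := by
      rw [← Real.sqrt_sq (norm_nonneg _), h1]
    rw [h2, Real.norm_eq_abs, abs_inv, abs_of_nonneg (Real.sqrt_nonneg _),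
      inv_mul_cancel₀ (ne_of_gt (Real.sqrt_pos.mpr hd))]
  -- closed form for the two-subspace Kaczmarz iterate
  have key1 : ∀ r s : Fin m, r ≠ s →
      ‖x - xk r s‖ ^ 2 = ‖x - xprev‖ ^ 2 - ⟪x - xprev, a s⟫ ^ 2 -
        (⟪x - xprev, a r⟫ - μ r s * ⟪x - xprev, a s⟫) ^ 2 / (1 - μ r s ^ 2) := by
    intro r s hrs
    have hd := hdpos r s hrs
    have hsr : ⟪a s, a r⟫ = μ r s := by rw [← hμs r s, hμ]
    have hxy : x - y s = (x - xprev) - ⟪x - xprev, a s⟫ • a s := by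
      rw [hy s, hcoef s]; abel
    have hxv : ⟪x, v r s⟫ = β r s := by
      have h1 : ⟪x, a r⟫ = b r := by rw [real_inner_comm]; exact hb r
      have h2 : ⟪x, a s⟫ = b s := by rw [real_inner_comm]; exact hb s
      rw [hv, hβ, real_inner_smul_right, inner_sub_right, real_inner_smul_right,
        h1, h2, div_eq_inv_mul]
      ring
    have hform : x - xk r s = (x - y s) - ⟪x - y s, v r s⟫ • v r s := by
      rw [hxk r s, inner_sub_left, hxv]
      abel
    have hwv : ⟪(x - xprev) - ⟪x - xprev, a s⟫ • a s, v r s⟫ =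
        (Real.sqrt (1 - μ r s ^ 2))⁻¹ *
          (⟪x - xprev, a r⟫ - μ r s * ⟪x - xprev, a s⟫) := by
      rw [hv]
      simp only [real_inner_smul_right, inner_sub_left, inner_sub_right,
        real_inner_smul_left, haa, hsr]
      ring
    have hsq : ((Real.sqrt (1 - μ r s ^ 2))⁻¹ *
        (⟪x - xprev, a r⟫ - μ r s * ⟪x - xprev, a s⟫)) ^ 2 =
        (⟪x - xprev, a r⟫ - μ r s * ⟪x - xprev, a s⟫) ^ 2 / (1 - μ r s ^ 2) := by
      rw [mul_pow, inv_pow, Real.sq_sqrt hd.le]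
      ring
    rw [hform, aux_proj _ _ (hvn r s hrs), hxy, aux_proj _ _ (ha s), hwv, hsq]
  -- pairwise inequality
  have hpair : ∀ r s : Fin m, s ≠ r →
      (‖x - xk r s‖ ^ 2 + (if r < s then
          C r s ^ 2 * (⟪x - xprev, a r⟫ ^ 2 + ⟪x - xprev, a s⟫ ^ 2) else 0)) +
        (‖x - xk s r‖ ^ 2 + (if s < r then
          C s r ^ 2 * (⟪x - xprev, a s⟫ ^ 2 + ⟪x - xprev, a r⟫ ^ 2) else 0)) ≤
      ‖x - ((xprev + (b r - ⟪xprev, a r⟫) • a r) +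
        (b s - ⟪xprev + (b r - ⟪xprev, a r⟫) • a r, a s⟫) • a s)‖ ^ 2 +
      ‖x - ((xprev + (b s - ⟪xprev, a s⟫) • a s) +
        (b r - ⟪xprev + (b s - ⟪xprev, a s⟫) • a s, a r⟫) • a r)‖ ^ 2 := by
    intro r s hsr
    have hrs : r ≠ s := Ne.symm hsr
    have hineq := scalar_ineq (μ r s) ⟪x - xprev, a r⟫ ⟪x - xprev, a s⟫
      (‖x - xprev‖ ^ 2) (C r s) (hdpos r s hrs) (hC r s)
    have hCs : C s r = C r s := by rw [hC, hC, hμs]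
    rw [key1 r s hrs, key1 s r hsr, key2 r s, key2 s r, hμs r s]
    rcases lt_or_gt_of_ne hrs with h | h
    · rw [if_pos h, if_neg (not_lt.mpr h.le)]
      linarith
    · rw [if_neg (not_lt.mpr h.le), if_pos h, hCs]
      linarith
  -- the sum inequality
  have hsum2 : (∑ r : Fin m, ∑ s ∈ Finset.univ.erase r,
      (‖x - xk r s‖ ^ 2 + (if r < s then
        C r s ^ 2 * (⟪x - xprev, a r⟫ ^ 2 + ⟪x - xprev, a s⟫ ^ 2) else 0))) ≤
      ∑ r : Fin m, ∑ s ∈ Finset.univ.erase r,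
        ‖x - ((xprev + (b r - ⟪xprev, a r⟫) • a r) +
          (b s - ⟪xprev + (b r - ⟪xprev, a r⟫) • a r, a s⟫) • a s)‖ ^ 2 :=
    sum_pair_le _ _ hpair
  have hT0 : (∑ r : Fin m, ∑ s : Fin m,
      (if r < s then
        C r s ^ 2 * (⟪x - xprev, a r⟫ ^ 2 + ⟪x - xprev, a s⟫ ^ 2) else 0)) =
      ∑ r : Fin m, ∑ s ∈ Finset.univ.erase r,
        (if r < s then
          C r s ^ 2 * (⟪x - xprev, a r⟫ ^ 2 + ⟪x - xprev, a s⟫ ^ 2) else 0) := by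
    refine Finset.sum_congr rfl fun r _ => ?_
    exact (Finset.sum_erase _ (by simp)).symm
  have hsum : (∑ r : Fin m, ∑ s ∈ Finset.univ.erase r, ‖x - xk r s‖ ^ 2) +
      (∑ r : Fin m, ∑ s : Fin m,
        (if r < s then
          C r s ^ 2 * (⟪x - xprev, a r⟫ ^ 2 + ⟪x - xprev, a s⟫ ^ 2) else 0)) ≤
      ∑ r : Fin m, ∑ s ∈ Finset.univ.erase r,
        ‖x - ((xprev + (b r - ⟪xprev, a r⟫) • a r) +
          (b s - ⟪xprev + (b r - ⟪xprev, a r⟫) • a r, a s⟫) • a s)‖ ^ 2 := by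
    rw [hT0]
    calc (∑ r : Fin m, ∑ s ∈ Finset.univ.erase r, ‖x - xk r s‖ ^ 2) +
        (∑ r : Fin m, ∑ s ∈ Finset.univ.erase r,
          (if r < s then
            C r s ^ 2 * (⟪x - xprev, a r⟫ ^ 2 + ⟪x - xprev, a s⟫ ^ 2) else 0)) =
        ∑ r : Fin m, ∑ s ∈ Finset.univ.erase r,
          (‖x - xk r s‖ ^ 2 + (if r < s then
            C r s ^ 2 * (⟪x - xprev, a r⟫ ^ 2 + ⟪x - xprev, a s⟫ ^ 2) else 0)) := by
          rw [← Finset.sum_add_distrib]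
          exact Finset.sum_congr rfl fun r _ => (Finset.sum_add_distrib).symm
      _ ≤ _ := hsum2
  have hm1 : (1:ℝ) ≤ (m:ℝ) := by
    have : 1 ≤ m := Nat.one_le_of_lt (Nat.lt_of_le_of_lt (Nat.zero_le n) hmn)
    exact_mod_cast this
  have hN : 0 ≤ 1 / ((m : ℝ) ^ 2 - m) := by
    apply one_div_nonneg.mpr
    nlinarith
  have h2 := mul_le_mul_of_nonneg_left hsum hN
  rw [mul_add] at h2
  linarith [hRK]
end

section
/- Let a_r, a_s be unit vectors in ℝⁿ with μ = ⟨a_r, a_s⟩, |μ| < 1, v = (a_r − μ a_s)/√(1−μ²), γ = √(1−μ²). Let x, x₀ ∈ ℝⁿ with ⟨a_r, x⟩ = b_r and ⟨a_s, x⟩ = b_s. Define z = x₀ + (b_r − ⟨x₀, a_r⟩)a_r and z' = z + (b_s − ⟨z, a_s⟩)a_s (two sequential standard Kaczmarz steps). Then ‖x − z'‖₂² = ‖x − x₀‖₂² − ⟨x − x₀, a_s⟩² − ⟨x − x₀, v⟩² + (μ²⟨x − x₀, v⟩ − γμ⟨x − x₀, a_s⟩)². -/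
/-!
Write `w = x - x₀`. Since `a_r` and `a_s` are unit vectors and `x` lies on both hyperplanes, each
Kaczmarz step replaces the error `w` by its projection orthogonal to the row used, so
`‖x - z'‖² = ‖w‖² - ⟪a_r, w⟫² - ⟪a_s, x - z⟫²` with `⟪a_s, x - z⟫ = ⟪a_s, w⟫ - μ ⟪a_r, w⟫`.
The component `a_r - μ a_s` of `a_r` orthogonal to `a_s` has norm `γ` and normalization `v`, so
`a_r = μ a_s + γ v` (also when `γ = 0`), hence
`⟪a_r, w⟫ = μ ⟪w, a_s⟫ + γ ⟪w, v⟫`, and with `γ² = 1 - μ²` the identity is a polynomial one.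
-/

open scoped RealInnerProductSpace

section Kaczmarz

variable {E : Type*} [NormedAddCommGroup E] [InnerProductSpace ℝ E]

noncomputable def kaczmarzStep (a : E) (b : ℝ) (y : E) : E := y + (b - ⟪y, a⟫) • a

theorem norm_sub_inner_smul_sq {u : E} (hu : ‖u‖ = 1) (w : E) :
    ‖w - ⟪u, w⟫ • u‖ ^ 2 = ‖w‖ ^ 2 - ⟪u, w⟫ ^ 2 := by
  rw [norm_sub_sq_real, real_inner_smul_right, norm_smul, real_inner_comm w u, mul_pow,
    Real.norm_eq_abs, sq_abs, hu]
  ring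

theorem sub_kaczmarzStep {a x : E} {b : ℝ} (hx : ⟪a, x⟫ = b) (y : E) :
    x - kaczmarzStep a b y = (x - y) - ⟪a, x - y⟫ • a := by
  rw [kaczmarzStep, inner_sub_right, hx, real_inner_comm y a]
  abel

theorem norm_sub_kaczmarzStep_sq {a x : E} {b : ℝ} (ha : ‖a‖ = 1) (hx : ⟪a, x⟫ = b) (y : E) :
    ‖x - kaczmarzStep a b y‖ ^ 2 = ‖x - y‖ ^ 2 - ⟪a, x - y⟫ ^ 2 := by
  rw [sub_kaczmarzStep hx, norm_sub_inner_smul_sq ha]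

theorem inner_sub_kaczmarzStep {a x : E} {b : ℝ} (hx : ⟪a, x⟫ = b) (u y : E) :
    ⟪u, x - kaczmarzStep a b y⟫ = ⟪u, x - y⟫ - ⟪a, x - y⟫ * ⟪u, a⟫ := by
  rw [sub_kaczmarzStep hx, inner_sub_right, real_inner_smul_right]

theorem norm_sub_inner_smul_sq_of_norm_eq_one {a s : E} (ha : ‖a‖ = 1) (hs : ‖s‖ = 1) :
    ‖a - ⟪a, s⟫ • s‖ ^ 2 = 1 - ⟪a, s⟫ ^ 2 := by
  rw [real_inner_comm, norm_sub_inner_smul_sq hs, ha, one_pow]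

end Kaczmarz

theorem stmt14_general {n : ℕ} (ar as : EuclideanSpace ℝ (Fin n))
    (har : ‖ar‖ = 1) (has : ‖as‖ = 1)
    (μ : ℝ) (hμ : μ = ⟪ar, as⟫)
    (v : EuclideanSpace ℝ (Fin n))
    (hv : v = (Real.sqrt (1 - μ ^ 2))⁻¹ • (ar - μ • as))
    (γ : ℝ) (hγ : γ = Real.sqrt (1 - μ ^ 2))
    (x x₀ : EuclideanSpace ℝ (Fin n)) (br bs : ℝ)
    (hbr : ⟪ar, x⟫ = br) (hbs : ⟪as, x⟫ = bs)
    (z z' : EuclideanSpace ℝ (Fin n))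
    (hz : z = x₀ + (br - ⟪x₀, ar⟫) • ar)
    (hz' : z' = z + (bs - ⟪z, as⟫) • as) :
    ‖x - z'‖ ^ 2 = ‖x - x₀‖ ^ 2 - ⟪x - x₀, as⟫ ^ 2 - ⟪x - x₀, v⟫ ^ 2 +
      (μ ^ 2 * ⟪x - x₀, v⟫ - γ * μ * ⟪x - x₀, as⟫) ^ 2 := by
  have hnormsq : ‖ar - μ • as‖ ^ 2 = 1 - μ ^ 2 := by
    rw [hμ, norm_sub_inner_smul_sq_of_norm_eq_one har has]
  have hnorm : ‖ar - μ • as‖ = γ := by rw [hγ, ← hnormsq, Real.sqrt_sq (norm_nonneg _)]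
  have hγsq : γ ^ 2 = 1 - μ ^ 2 := by rw [← hnorm, hnormsq]
  have hsplit : ar = μ • as + γ • v := by
    rw [hv, ← hγ, ← hnorm, ← NormedSpace.normalize, NormedSpace.norm_smul_normalize, add_sub_cancel]
  have hcoord : ⟪ar, x - x₀⟫ = μ * ⟪x - x₀, as⟫ + γ * ⟪x - x₀, v⟫ := by
    rw [hsplit, inner_add_left, real_inner_smul_left, real_inner_smul_left,
      real_inner_comm as, real_inner_comm v]
  obtain rfl : z = kaczmarzStep ar br x₀ := hz
  obtain rfl : z' = kaczmarzStep as bs (kaczmarzStep ar br x₀) := hz'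
  rw [norm_sub_kaczmarzStep_sq has hbs, norm_sub_kaczmarzStep_sq har hbr,
    inner_sub_kaczmarzStep hbr, real_inner_comm ar as, ← hμ, real_inner_comm (x - x₀) as, hcoord]
  linear_combination (-(μ ^ 2 * ⟪x - x₀, as⟫ ^ 2) - (1 + μ ^ 2) * ⟪x - x₀, v⟫ ^ 2) * hγsq

theorem stmt14 {n : ℕ} (ar as : EuclideanSpace ℝ (Fin n))
    (har : ‖ar‖ = 1) (has : ‖as‖ = 1)
    (μ : ℝ) (hμ : μ = ⟪ar, as⟫) (hcoh : |μ| < 1)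
    (v : EuclideanSpace ℝ (Fin n))
    (hv : v = (Real.sqrt (1 - μ ^ 2))⁻¹ • (ar - μ • as))
    (γ : ℝ) (hγ : γ = Real.sqrt (1 - μ ^ 2))
    (x x₀ : EuclideanSpace ℝ (Fin n)) (br bs : ℝ)
    (hbr : ⟪ar, x⟫ = br) (hbs : ⟪as, x⟫ = bs)
    (z z' : EuclideanSpace ℝ (Fin n))
    (hz : z = x₀ + (br - ⟪x₀, ar⟫) • ar)
    (hz' : z' = z + (bs - ⟪z, as⟫) • as) :
    ‖x - z'‖ ^ 2 = ‖x - x₀‖ ^ 2 - ⟪x - x₀, as⟫ ^ 2 - ⟪x - x₀, v⟫ ^ 2 +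
      (μ ^ 2 * ⟪x - x₀, v⟫ - γ * μ * ⟪x - x₀, as⟫) ^ 2 :=
  stmt14_general ar as har has μ hμ v hv γ hγ x x₀ br bs hbr hbs z z' hz hz'
end
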